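/- arXiv:2605.03064 — 4 statements merged into one kernel-verified Lean document; each statement's English description precedes it below -/
import Mathlib

section
/- For each d ∈ ℕ, the class of terms of ℚ[ReLU, x_i]_{i∈ℕ} of degree at most d and the fragment RPL(⊙)_{≤d} have the same expressive power with respect to scaling. That is: (1) for every n ≥ 1, every tuple (t_1, …, t_n) of terms with deg(t_j) ≤ d for all j and every real i > 0, there exist a real k ≥ i and formulae φ_1, …, φ_n of RPL(⊙)_{≤d} such that φ_j is (i,k)-equivalent to t_j for every j; and (2) for every tuple (φ_1, …, φ_n) of formulae of RPL(⊙)_{≤d} there is a tuple (t_1, …, t_n) of terms with deg(t_j) ≤ d and t_j equivalent to φ_j for every j. -/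
/-- Terms of ℚ[ReLU, x_i]_{i∈ℕ}; variables are indexed by ℕ. -/
inductive RTerm : Type where
  | const : ℚ → RTerm
  | var : ℕ → RTerm
  | add : RTerm → RTerm → RTerm
  | mul : RTerm → RTerm → RTerm
  | relu : RTerm → RTerm

/-- Value of a term under an evaluation map `E : ℕ → ℝ`. -/
def RTerm.eval (E : ℕ → ℝ) : RTerm → ℝ
  | .const r => (r : ℝ)
  | .var x => E x
  | .add t t' => t.eval E + t'.eval E
  | .mul t t' => t.eval E * t'.eval E
  | .relu t => max 0 (t.eval E)

/-- Degree of a term. -/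
def RTerm.deg : RTerm → ℕ
  | .const _ => 0
  | .var _ => 1
  | .add t t' => max t.deg t'.deg
  | .mul t t' => t.deg + t'.deg
  | .relu t => t.deg

/-- Subterms of a term. -/
def RTerm.subt : RTerm → List RTerm
  | .const r => [.const r]
  | .var x => [.var x]
  | .add t t' => t.subt ++ t'.subt ++ [.add t t']
  | .mul t t' => t.subt ++ t'.subt ++ [.mul t t']
  | .relu t => t.subt ++ [.relu t]

/-- Proto-neurons. -/
inductive RTerm.ProtoNeuron : RTerm → Prop where
  | const (r : ℚ) : RTerm.ProtoNeuron (.const r)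
  | var (x : ℕ) : RTerm.ProtoNeuron (.var x)
  | add {t t'} : RTerm.ProtoNeuron t → RTerm.ProtoNeuron t' → RTerm.ProtoNeuron (.add t t')
  | mul {t t'} : RTerm.ProtoNeuron t → RTerm.ProtoNeuron t' → t.deg + t'.deg ≤ 1 →
      RTerm.ProtoNeuron (.mul t t')
  | relu {t} : RTerm.ProtoNeuron t → RTerm.ProtoNeuron (.relu t)

/-- `ReLU (w₁·n₁ + (w₂·n₂ + (⋯ + b)))`. -/
def layerNeuron (ws : List (ℚ × RTerm)) (b : ℚ) : RTerm :=
  .relu (ws.foldr (fun wt acc => .add (.mul (.const wt.1) wt.2) acc) (.const b))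

/-- Rational-parameter ReLU-activated neural networks of a given depth,
identified with the tuples of their output neurons. -/
inductive IsNN : ℕ → List RTerm → Prop where
  | input (ys : List ℕ) : ys ≠ [] → ys.Nodup → IsNN 0 (ys.map RTerm.var)
  | layer {d : ℕ} {prev : List RTerm} (hprev : IsNN d prev)
      (params : List (List ℚ × ℚ)) (hne : params ≠ [])
      (hlen : ∀ p ∈ params, p.1.length = prev.length) :
      IsNN (d + 1) (params.map fun p => layerNeuron (p.1.zip prev) p.2)

/-- A neuron is a component of some neural network. -/
def IsNeuron (t : RTerm) : Prop := ∃ d N, IsNN d N ∧ t ∈ N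

/-- Formulae of RPL(⊙): truth constants r̄ for r ∈ ℚ ∩ [0,1], proposition
symbols, →_L and ⊙. -/
inductive RPLForm : Type where
  | const : {r : ℚ // 0 ≤ r ∧ r ≤ 1} → RPLForm
  | prop : ℕ → RPLForm
  | impL : RPLForm → RPLForm → RPLForm
  | conj : RPLForm → RPLForm → RPLForm

/-- A valuation assigns to every proposition symbol a value in [0,1]. -/
def IsValuation (V : ℕ → ℝ) : Prop := ∀ p, 0 ≤ V p ∧ V p ≤ 1

/-- Truth value of an RPL(⊙)-formula under a valuation. -/
def RPLForm.val (V : ℕ → ℝ) : RPLForm → ℝ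
  | .const r => (r.1 : ℝ)
  | .prop p => V p
  | .impL φ ψ => min 1 (1 - φ.val V + ψ.val V)
  | .conj φ ψ => φ.val V * ψ.val V

/-- Formulae with no proposition symbols. -/
def RPLForm.propFree : RPLForm → Prop
  | .const _ => True
  | .prop _ => False
  | .impL φ ψ => φ.propFree ∧ ψ.propFree
  | .conj φ ψ => φ.propFree ∧ ψ.propFree

/-- RPL: the ⊙-free fragment of RPL(⊙). -/
def RPLForm.noConj : RPLForm → Prop
  | .const _ => True
  | .prop _ => True
  | .impL φ ψ => φ.noConj ∧ ψ.noConj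
  | .conj _ _ => False

/-- Łukasiewicz logic: the only truth constant is 0̄ and there is no ⊙. -/
def RPLForm.isLuk : RPLForm → Prop
  | .const r => r.1 = 0
  | .prop _ => True
  | .impL φ ψ => φ.isLuk ∧ ψ.isLuk
  | .conj _ _ => False

/-- The fragment RPL(⊙)_{≤ n}. -/
inductive RPLForm.InFrag : ℕ → RPLForm → Prop where
  | propfree {n φ} : RPLForm.propFree φ → RPLForm.InFrag n φ
  | prop {n} (p : ℕ) : RPLForm.InFrag (n + 1) (.prop p)
  | up {n φ} : RPLForm.InFrag n φ → RPLForm.InFrag (n + 1) φ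
  | conj {n i j α β} : RPLForm.InFrag i α → RPLForm.InFrag j β → i + j ≤ n + 1 →
      RPLForm.InFrag (n + 1) (.conj α β)
  | impL {n φ ψ} : RPLForm.InFrag (n + 1) φ → RPLForm.InFrag (n + 1) ψ →
      RPLForm.InFrag (n + 1) (.impL φ ψ)

/-- Formulae of LΠ½. -/
inductive LPiForm : Type where
  | zero : LPiForm
  | half : LPiForm
  | prop : ℕ → LPiForm
  | impL : LPiForm → LPiForm → LPiForm
  | conj : LPiForm → LPiForm → LPiForm
  | impP : LPiForm → LPiForm → LPiForm

/-- Truth value of an LΠ½-formula under a valuation. -/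
noncomputable def LPiForm.val (V : ℕ → ℝ) : LPiForm → ℝ
  | .zero => 0
  | .half => 1 / 2
  | .prop p => V p
  | .impL φ ψ => min 1 (1 - φ.val V + ψ.val V)
  | .conj φ ψ => φ.val V * ψ.val V
  | .impP φ ψ => if φ.val V ≤ ψ.val V then 1 else ψ.val V / φ.val V

/-- LΠ½-formulae with no proposition symbols (LΠ½_{≤0}). -/
def LPiForm.propFree : LPiForm → Prop
  | .zero => True
  | .half => True
  | .prop _ => False
  | .impL φ ψ => φ.propFree ∧ ψ.propFree
  | .conj φ ψ => φ.propFree ∧ ψ.propFree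
  | .impP φ ψ => φ.propFree ∧ ψ.propFree

/-- LΠ½(→_P⁻): no proposition symbols in the scope of →_P. -/
inductive LPiForm.InPF : LPiForm → Prop where
  | base {φ} : LPiForm.propFree φ → LPiForm.InPF φ
  | prop (p : ℕ) : LPiForm.InPF (.prop p)
  | impL {φ ψ} : LPiForm.InPF φ → LPiForm.InPF ψ → LPiForm.InPF (.impL φ ψ)
  | conj {φ ψ} : LPiForm.InPF φ → LPiForm.InPF ψ → LPiForm.InPF (.conj φ ψ)

/-- LΠ½(⊙⁻, →_P⁻): no proposition symbols in the scope of ⊙ or →_P. -/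
inductive LPiForm.InPFF : LPiForm → Prop where
  | base {φ} : LPiForm.propFree φ → LPiForm.InPFF φ
  | prop (p : ℕ) : LPiForm.InPFF (.prop p)
  | impL {φ ψ} : LPiForm.InPFF φ → LPiForm.InPFF ψ → LPiForm.InPFF (.impL φ ψ)

/-- The fragment LΠ½(→_P⁻)_{≤ n}. -/
inductive LPiForm.InFragPF : ℕ → LPiForm → Prop where
  | propfree {n φ} : LPiForm.propFree φ → LPiForm.InFragPF n φ
  | prop {n} (p : ℕ) : LPiForm.InFragPF (n + 1) (.prop p)
  | up {n φ} : LPiForm.InFragPF n φ → LPiForm.InFragPF (n + 1) φ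
  | conj {n i j α β} : LPiForm.InFragPF i α → LPiForm.InFragPF j β → i + j ≤ n + 1 →
      LPiForm.InFragPF (n + 1) (.conj α β)
  | impL {n φ ψ} : LPiForm.InFragPF (n + 1) φ → LPiForm.InFragPF (n + 1) ψ →
      LPiForm.InFragPF (n + 1) (.impL φ ψ)

/-- scale_k(x) = (k + x)/(2k). -/
noncomputable def scaleK (k x : ℝ) : ℝ := (k + x) / (2 * k)

/-- Equivalence of a term and an RPL(⊙)-formula (the bijection p ↦ x_p is
the identity on ℕ). -/
def TermFormEquiv (t : RTerm) (φ : RPLForm) : Prop :=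
  ∀ (E V : ℕ → ℝ), IsValuation V → (∀ x, E x = V x) → t.eval E = φ.val V

/-- (i,k)-equivalence of a formula to a term. -/
def IKEquiv (i k : ℝ) (φ : RPLForm) (t : RTerm) : Prop :=
  ∀ E : ℕ → ℝ, (∀ x, -i ≤ E x ∧ E x ≤ i) →
    φ.val (fun p => scaleK k (E p)) = scaleK k (t.eval E)

/-- k-equivalence of formulae. -/
def KEquiv (k : ℝ) (ψ φ : RPLForm) : Prop :=
  ∀ V V' : ℕ → ℝ, IsValuation V → IsValuation V' → (∀ p, V' p = scaleK k (V p)) →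
    ψ.val V' = scaleK k (φ.val V)

/-- Equivalence of terms. -/
def TermEquiv (t t' : RTerm) : Prop := ∀ E : ℕ → ℝ, t.eval E = t'.eval E

/-- [0,1]-equivalence of terms. -/
def TermEquiv01 (t t' : RTerm) : Prop :=
  ∀ E : ℕ → ℝ, (∀ x, 0 ≤ E x ∧ E x ≤ 1) → t.eval E = t'.eval E

/-- Equivalence of an RPL(⊙)-formula and an LΠ½-formula. -/
def RLEquiv (φ : RPLForm) (ψ : LPiForm) : Prop :=
  ∀ V : ℕ → ℝ, IsValuation V → φ.val V = ψ.val V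

/-- The truth constant 0̄. -/
def RPLForm.zeroC : RPLForm := .const ⟨0, by norm_num⟩

/-- ¬_L φ := φ →_L 0̄. -/
def RPLForm.negL (φ : RPLForm) : RPLForm := φ.impL RPLForm.zeroC

/-- φ ⊕ ψ := ¬_L φ →_L ψ. -/
def RPLForm.oplus (φ ψ : RPLForm) : RPLForm := φ.negL.impL ψ

/-- φ ⊗ ψ := ¬_L (φ →_L ¬_L ψ). -/
def RPLForm.otimes (φ ψ : RPLForm) : RPLForm := (φ.impL ψ.negL).negL

/-- φ ⊖ ψ := φ ⊗ ¬_L ψ  (semantics: max{0, V(φ) − V(ψ)}). -/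
def RPLForm.ominus (φ ψ : RPLForm) : RPLForm := φ.otimes ψ.negL

/-- φ ⊕' ψ := (φ ⊖ ¼̄) ⊕ (ψ ⊖ ¼̄). -/
def RPLForm.oplus' (φ ψ : RPLForm) : RPLForm :=
  (φ.ominus (.const ⟨1/4, by norm_num⟩)).oplus (ψ.ominus (.const ⟨1/4, by norm_num⟩))

/-- The iterated sum ⨀_n. -/
def RPLForm.bigOplus : ℕ → RPLForm → RPLForm
  | 0, _ => RPLForm.zeroC
  | n + 1, φ => (RPLForm.bigOplus n φ).oplus φ

/-- The iterated operator ⨀'_n; `Nat.clog 2 n` is the least j with n ≤ 2^j. -/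
def RPLForm.bigOplus' : ℕ → RPLForm → RPLForm
  | 0, _ => .const ⟨1/2, by norm_num⟩
  | 1, φ => φ
  | n + 2, φ =>
      RPLForm.oplus' (RPLForm.bigOplus' (2 ^ (Nat.clog 2 (n + 2) - 1)) φ)
        (RPLForm.bigOplus' ((n + 2) - 2 ^ (Nat.clog 2 (n + 2) - 1)) φ)
  termination_by n _ => n
  decreasing_by
  · exact Nat.pow_pred_clog_lt_self (b := 2) (x := n + 2) (by norm_num) (by omega)
  · have h1 : 0 < 2 ^ (Nat.clog 2 (n + 2) - 1) := Nat.pow_pos (by norm_num)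
    omega

theorem inv2k_mem (k : ℕ) (hk : 1 ≤ k) : 0 ≤ (1 / (2 * (k : ℚ))) ∧ (1 / (2 * (k : ℚ))) ≤ 1 := by
  have h : (1 : ℚ) ≤ (k : ℚ) := by exact_mod_cast hk
  constructor
  · positivity
  · rw [div_le_one (by linarith)]
    linarith

/-- φ ⊙^k ψ := ⨀_k((⨀_2(φ ⊙ ψ) ⊕ (1/(2k))̄) ⊖ (φ ⊕' ψ)). -/
def RPLForm.odotPow (k : ℕ) (hk : 1 ≤ k) (φ ψ : RPLForm) : RPLForm :=
  RPLForm.bigOplus k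
    (((RPLForm.bigOplus 2 (φ.conj ψ)).oplus
        (.const ⟨1 / (2 * (k : ℚ)), inv2k_mem k hk⟩)).ominus (φ.oplus' ψ))

/-! ### Auxiliary development -/

namespace CD

def halfC : RPLForm := .const ⟨1/2, by norm_num⟩

/-- formula for scaled addition -/
def addF (φ ψ : RPLForm) : RPLForm := (φ.ominus halfC).oplus (ψ.ominus (halfC.ominus φ))

/-- formula for scaled ReLU -/
def reluF (φ : RPLForm) : RPLForm := (φ.ominus halfC).oplus halfC

/-- formula for scaled multiplication -/
def mulF (k : ℕ) (φ ψ : RPLForm) : RPLForm :=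
  (halfC.ominus ((RPLForm.bigOplus (2*k) ((φ.ominus halfC).conj (halfC.ominus ψ))).oplus
      (RPLForm.bigOplus (2*k) ((halfC.ominus φ).conj (ψ.ominus halfC))))).oplus
    ((RPLForm.bigOplus (2*k) ((φ.ominus halfC).conj (ψ.ominus halfC))).oplus
      (RPLForm.bigOplus (2*k) ((halfC.ominus φ).conj (halfC.ominus ψ))))

def trConst (k : ℕ) (r : ℚ) : RPLForm :=
  .const ⟨max 0 (min 1 ((k+r)/(2*k))),
    ⟨le_max_left _ _, max_le (by norm_num) (min_le_left _ _)⟩⟩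

def translate (k : ℕ) : RTerm → RPLForm
  | .const r => trConst k r
  | .var x => .prop x
  | .add t t' => addF (translate k t) (translate k t')
  | .mul t t' => mulF k (translate k t) (translate k t')
  | .relu t => reluF (translate k t)

/-- bound on the absolute values of terms -/
noncomputable def bnd (i : ℝ) : RTerm → ℝ
  | .const r => |(r:ℝ)| + 1
  | .var _ => i + 1
  | .add t t' => bnd i t + bnd i t'
  | .mul t t' => bnd i t * bnd i t'
  | .relu t => bnd i t

lemma one_le_bnd (i : ℝ) (hi : 0 ≤ i) : ∀ t, 1 ≤ bnd i t := by
  intro t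
  induction t with
  | const r => simp only [bnd]; linarith [abs_nonneg ((r:ℝ))]
  | var x => simp only [bnd]; linarith
  | add t t' iht iht' => simp only [bnd]; linarith
  | mul t t' iht iht' => simp only [bnd]; nlinarith
  | relu t iht => exact iht

lemma eval_le_bnd (i : ℝ) (hi : 0 ≤ i) (t : RTerm) (E : ℕ → ℝ)
    (hE : ∀ x, -i ≤ E x ∧ E x ≤ i) : |t.eval E| ≤ bnd i t := by
  induction t with
  | const r => simp only [RTerm.eval, bnd]; linarith
  | var x =>
      simp only [RTerm.eval, bnd]
      have := hE x
      rw [abs_le]; constructor <;> linarith [this.1, this.2]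
  | add t t' iht iht' =>
      simp only [RTerm.eval, bnd]
      calc |t.eval E + t'.eval E| ≤ |t.eval E| + |t'.eval E| := abs_add_le _ _
        _ ≤ _ := by linarith
  | mul t t' iht iht' =>
      simp only [RTerm.eval, bnd, abs_mul]
      exact mul_le_mul iht iht' (abs_nonneg _)
        (le_trans (by norm_num) (one_le_bnd i hi t))
  | relu t iht =>
      simp only [RTerm.eval, bnd]
      rw [abs_le] at iht ⊢
      refine ⟨?_, max_le (le_trans (by norm_num) (one_le_bnd i hi t)) iht.2⟩
      have := le_max_left (0:ℝ) (t.eval E)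
      linarith [iht.1]

/-! #### scaleK arithmetic -/

lemma scaleK_mem {k a : ℝ} (hk : 0 < k) (h1 : -k ≤ a) (h2 : a ≤ k) :
    0 ≤ scaleK k a ∧ scaleK k a ≤ 1 := by
  unfold scaleK
  constructor
  · apply div_nonneg (by linarith) (by linarith)
  · rw [div_le_one (by linarith)]; linarith

lemma scaleK_sub_half {k : ℝ} (hk : 0 < k) (a : ℝ) : scaleK k a - 1/2 = a / (2*k) := by
  unfold scaleK; field_simp; ring

/-! #### Semantics of derived connectives -/

lemma val_halfC (V : ℕ → ℝ) : halfC.val V = 1/2 := by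
  simp [halfC, RPLForm.val]

lemma val_negL (V : ℕ → ℝ) (φ : RPLForm) (h0 : 0 ≤ φ.val V) :
    (φ.negL).val V = 1 - φ.val V := by
  simp only [RPLForm.negL, RPLForm.val, RPLForm.zeroC]
  push_cast
  rw [add_zero, min_eq_right (by linarith)]

lemma val_oplus (V : ℕ → ℝ) (φ ψ : RPLForm) (h0 : 0 ≤ φ.val V) :
    (φ.oplus ψ).val V = min 1 (φ.val V + ψ.val V) := by
  simp only [RPLForm.oplus, RPLForm.negL, RPLForm.zeroC, RPLForm.val]
  push_cast
  rw [add_zero, min_eq_right (by linarith : 1 - φ.val V ≤ 1)]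
  ring_nf

lemma val_ominus (V : ℕ → ℝ) (φ ψ : RPLForm) (h0 : 0 ≤ φ.val V) (h1 : φ.val V ≤ 1)
    (g0 : 0 ≤ ψ.val V) (g1 : ψ.val V ≤ 1) :
    (φ.ominus ψ).val V = max 0 (φ.val V - ψ.val V) := by
  simp only [RPLForm.ominus, RPLForm.otimes, RPLForm.negL, RPLForm.zeroC, RPLForm.val]
  push_cast
  rw [add_zero, add_zero, add_zero, min_eq_right (by linarith : 1 - ψ.val V ≤ 1),
    min_eq_right (by linarith : 1 - (1 - ψ.val V) ≤ 1)]
  rw [min_def, min_def, max_def]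
  split_ifs <;> linarith

lemma val_bigOplus (V : ℕ → ℝ) (φ : RPLForm) (h0 : 0 ≤ φ.val V) (n : ℕ) :
    (RPLForm.bigOplus n φ).val V = min 1 ((n:ℝ) * φ.val V) := by
  induction n with
  | zero => simp [RPLForm.bigOplus, RPLForm.zeroC, RPLForm.val]
  | succ m ih =>
      rw [RPLForm.bigOplus, val_oplus _ _ _ (by rw [ih]; positivity), ih]
      push_cast
      rcases le_total (1:ℝ) ((m:ℝ) * φ.val V) with h | h
      · rw [min_eq_left h, min_eq_left (by nlinarith), min_eq_left (by linarith)]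
      · rw [min_eq_right h]; ring_nf


/-! #### Fragment lemmas -/

lemma InFrag_mono {m n : ℕ} {φ : RPLForm} (h : m ≤ n) (hf : RPLForm.InFrag m φ) :
    RPLForm.InFrag n φ := by
  induction h with
  | refl => exact hf
  | step _ ih => exact .up ih

lemma InFrag_zero {φ : RPLForm} (h : RPLForm.InFrag 0 φ) : φ.propFree := by
  cases h; assumption

lemma propFree_impL {φ ψ : RPLForm} (h1 : φ.propFree) (h2 : ψ.propFree) :
    (φ.impL ψ).propFree := ⟨h1, h2⟩

lemma propFree_conj {φ ψ : RPLForm} (h1 : φ.propFree) (h2 : ψ.propFree) :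
    (φ.conj ψ).propFree := ⟨h1, h2⟩

lemma InFrag_const (n : ℕ) (r : {r : ℚ // 0 ≤ r ∧ r ≤ 1}) :
    RPLForm.InFrag n (.const r) := .propfree trivial

lemma InFrag_impL {n : ℕ} {φ ψ : RPLForm} (h1 : RPLForm.InFrag n φ)
    (h2 : RPLForm.InFrag n ψ) : RPLForm.InFrag n (φ.impL ψ) := by
  cases n with
  | zero => exact .propfree (propFree_impL (InFrag_zero h1) (InFrag_zero h2))
  | succ m => exact .impL h1 h2

lemma InFrag_negL {n : ℕ} {φ : RPLForm} (h : RPLForm.InFrag n φ) :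
    RPLForm.InFrag n φ.negL := InFrag_impL h (InFrag_const n _)

lemma InFrag_oplus {n : ℕ} {φ ψ : RPLForm} (h1 : RPLForm.InFrag n φ)
    (h2 : RPLForm.InFrag n ψ) : RPLForm.InFrag n (φ.oplus ψ) :=
  InFrag_impL (InFrag_negL h1) h2

lemma InFrag_otimes {n : ℕ} {φ ψ : RPLForm} (h1 : RPLForm.InFrag n φ)
    (h2 : RPLForm.InFrag n ψ) : RPLForm.InFrag n (φ.otimes ψ) :=
  InFrag_negL (InFrag_impL h1 (InFrag_negL h2))

lemma InFrag_ominus {n : ℕ} {φ ψ : RPLForm} (h1 : RPLForm.InFrag n φ)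
    (h2 : RPLForm.InFrag n ψ) : RPLForm.InFrag n (φ.ominus ψ) :=
  InFrag_otimes h1 (InFrag_negL h2)

lemma InFrag_halfC (n : ℕ) : RPLForm.InFrag n halfC := InFrag_const n _

lemma InFrag_bigOplus {n : ℕ} {φ : RPLForm} (h : RPLForm.InFrag n φ) (m : ℕ) :
    RPLForm.InFrag n (RPLForm.bigOplus m φ) := by
  induction m with
  | zero => exact InFrag_const n _
  | succ j ih => exact InFrag_oplus ih h

lemma InFrag_conj {a b : ℕ} {φ ψ : RPLForm} (h1 : RPLForm.InFrag a φ)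
    (h2 : RPLForm.InFrag b ψ) : RPLForm.InFrag (a + b) (φ.conj ψ) := by
  cases hab : a + b with
  | zero =>
      have ha : a = 0 := by omega
      have hb : b = 0 := by omega
      exact .propfree (propFree_conj (InFrag_zero (ha ▸ h1)) (InFrag_zero (hb ▸ h2)))
  | succ m => exact .conj h1 h2 (le_of_eq hab)

lemma translate_frag (k : ℕ) : ∀ t : RTerm, RPLForm.InFrag t.deg (translate k t) := by
  intro t
  induction t with
  | const r => exact InFrag_const _ _
  | var x => exact .prop x
  | add t t' iht iht' =>
      have h1 := InFrag_mono (le_max_left t.deg t'.deg) iht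
      have h2 := InFrag_mono (le_max_right t.deg t'.deg) iht'
      exact InFrag_oplus (InFrag_ominus h1 (InFrag_halfC _))
        (InFrag_ominus h2 (InFrag_ominus (InFrag_halfC _) h1))
  | mul t t' iht iht' =>
      refine InFrag_oplus (InFrag_ominus (InFrag_halfC _) (InFrag_oplus ?_ ?_))
        (InFrag_oplus ?_ ?_) <;>
      · apply InFrag_bigOplus
        exact InFrag_conj (by first
          | exact InFrag_ominus iht (InFrag_halfC _)
          | exact InFrag_ominus (InFrag_halfC _) iht)
          (by first
          | exact InFrag_ominus iht' (InFrag_halfC _)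
          | exact InFrag_ominus (InFrag_halfC _) iht')
  | relu t iht => exact InFrag_oplus (InFrag_ominus iht (InFrag_halfC _)) (InFrag_halfC _)


/-! #### Values of the scaled connectives -/

lemma max_sub_max_neg (x : ℝ) : max 0 x - max 0 (-x) = x := by
  rcases le_total x 0 with h | h
  · rw [max_eq_left h, max_eq_right (by linarith)]; ring
  · rw [max_eq_right h, max_eq_left (by linarith)]; ring

lemma val_ominus_halfC (V : ℕ → ℝ) (φ : RPLForm) (h0 : 0 ≤ φ.val V) (h1 : φ.val V ≤ 1) :
    (φ.ominus halfC).val V = max 0 (φ.val V - 1/2) := by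
  rw [val_ominus V φ halfC h0 h1 (by rw [val_halfC]; norm_num) (by rw [val_halfC]; norm_num),
    val_halfC]

lemma val_halfC_ominus (V : ℕ → ℝ) (φ : RPLForm) (h0 : 0 ≤ φ.val V) (h1 : φ.val V ≤ 1) :
    (halfC.ominus φ).val V = max 0 (1/2 - φ.val V) := by
  rw [val_ominus V halfC φ (by rw [val_halfC]; norm_num) (by rw [val_halfC]; norm_num) h0 h1,
    val_halfC]

lemma val_conj (V : ℕ → ℝ) (φ ψ : RPLForm) : (φ.conj ψ).val V = φ.val V * ψ.val V := rfl

lemma val_addF (V : ℕ → ℝ) (φ ψ : RPLForm) (hu0 : 0 ≤ φ.val V) (hu1 : φ.val V ≤ 1)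
    (hv0 : 0 ≤ ψ.val V) (hv1 : ψ.val V ≤ 1)
    (hw0 : 0 ≤ φ.val V + ψ.val V - 1/2) (hw1 : φ.val V + ψ.val V - 1/2 ≤ 1) :
    (addF φ ψ).val V = φ.val V + ψ.val V - 1/2 := by
  unfold addF
  rw [val_oplus _ _ _ (by rw [val_ominus_halfC V φ hu0 hu1]; exact le_max_left _ _),
    val_ominus_halfC V φ hu0 hu1,
    val_ominus V ψ _ hv0 hv1
      (by rw [val_halfC_ominus V φ hu0 hu1]; exact le_max_left _ _)
      (by rw [val_halfC_ominus V φ hu0 hu1]; exact max_le (by norm_num) (by linarith)),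
    val_halfC_ominus V φ hu0 hu1]
  rw [max_def, max_def, max_def, min_def]
  split_ifs <;> linarith

lemma val_reluF (V : ℕ → ℝ) (φ : RPLForm) (hu0 : 0 ≤ φ.val V) (hu1 : φ.val V ≤ 1) :
    (reluF φ).val V = max (1/2) (φ.val V) := by
  unfold reluF
  rw [val_oplus _ _ _ (by rw [val_ominus_halfC V φ hu0 hu1]; exact le_max_left _ _),
    val_ominus_halfC V φ hu0 hu1, val_halfC]
  rw [max_def, max_def, min_def]
  split_ifs <;> linarith

lemma val_mulF (V : ℕ → ℝ) (k : ℕ) (φ ψ : RPLForm) (δ₁ δ₂ : ℝ)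
    (hu0 : 0 ≤ φ.val V) (hu1 : φ.val V ≤ 1) (hv0 : 0 ≤ ψ.val V) (hv1 : ψ.val V ≤ 1)
    (hd1 : |φ.val V - 1/2| ≤ δ₁) (hd2 : |ψ.val V - 1/2| ≤ δ₂)
    (hsmall : 2 * (k:ℝ) * (δ₁ * δ₂) ≤ 1/8) :
    (mulF k φ ψ).val V = 1/2 + 2*(k:ℝ) * ((φ.val V - 1/2) * (ψ.val V - 1/2)) := by
  set u := φ.val V with hu
  set v := ψ.val V with hv
  have hδ₁0 : 0 ≤ δ₁ := le_trans (abs_nonneg _) hd1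
  have hδ₂0 : 0 ≤ δ₂ := le_trans (abs_nonneg _) hd2
  set p : ℝ := max 0 (u - 1/2) with hp
  set p' : ℝ := max 0 (1/2 - u) with hp'
  set q : ℝ := max 0 (v - 1/2) with hq
  set q' : ℝ := max 0 (1/2 - v) with hq'
  have hpd : p ≤ δ₁ := max_le hδ₁0 (le_trans (le_abs_self _) hd1)
  have hp'd : p' ≤ δ₁ := max_le hδ₁0 (by linarith [neg_le_abs (u - 1/2)])
  have hqd : q ≤ δ₂ := max_le hδ₂0 (le_trans (le_abs_self _) hd2)
  have hq'd : q' ≤ δ₂ := max_le hδ₂0 (by linarith [neg_le_abs (v - 1/2)])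
  have hp0 : 0 ≤ p := le_max_left _ _
  have hp'0 : 0 ≤ p' := le_max_left _ _
  have hq0 : 0 ≤ q := le_max_left _ _
  have hq'0 : 0 ≤ q' := le_max_left _ _
  have hk0 : (0:ℝ) ≤ (k:ℝ) := Nat.cast_nonneg k
  have key : ∀ x y : ℝ, 0 ≤ x → x ≤ δ₁ → 0 ≤ y → y ≤ δ₂ → 2*(k:ℝ)*(x*y) ≤ 1/8 := by
    intro x y hx hxd hy hyd
    have hxy : x * y ≤ δ₁ * δ₂ := mul_le_mul hxd hyd hy hδ₁0
    nlinarith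
  have e1 : (φ.ominus halfC).val V = p := val_ominus_halfC V φ hu0 hu1
  have e2 : (halfC.ominus φ).val V = p' := val_halfC_ominus V φ hu0 hu1
  have e3 : (ψ.ominus halfC).val V = q := val_ominus_halfC V ψ hv0 hv1
  have e4 : (halfC.ominus ψ).val V = q' := val_halfC_ominus V ψ hv0 hv1
  have hcast : ((2*k : ℕ):ℝ) = 2*(k:ℝ) := by push_cast; ring
  have b1 : (RPLForm.bigOplus (2*k) ((φ.ominus halfC).conj (ψ.ominus halfC))).val V
      = 2*(k:ℝ)*(p*q) := by
    rw [val_bigOplus _ _ (by rw [val_conj, e1, e3]; exact mul_nonneg hp0 hq0), hcast]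
    rw [val_conj, e1, e3]
    exact min_eq_right (by linarith [key p q hp0 hpd hq0 hqd])
  have b2 : (RPLForm.bigOplus (2*k) ((halfC.ominus φ).conj (halfC.ominus ψ))).val V
      = 2*(k:ℝ)*(p'*q') := by
    rw [val_bigOplus _ _ (by rw [val_conj, e2, e4]; exact mul_nonneg hp'0 hq'0), hcast]
    rw [val_conj, e2, e4]
    exact min_eq_right (by linarith [key p' q' hp'0 hp'd hq'0 hq'd])
  have b3 : (RPLForm.bigOplus (2*k) ((φ.ominus halfC).conj (halfC.ominus ψ))).val V
      = 2*(k:ℝ)*(p*q') := by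
    rw [val_bigOplus _ _ (by rw [val_conj, e1, e4]; exact mul_nonneg hp0 hq'0), hcast]
    rw [val_conj, e1, e4]
    exact min_eq_right (by linarith [key p q' hp0 hpd hq'0 hq'd])
  have b4 : (RPLForm.bigOplus (2*k) ((halfC.ominus φ).conj (ψ.ominus halfC))).val V
      = 2*(k:ℝ)*(p'*q) := by
    rw [val_bigOplus _ _ (by rw [val_conj, e2, e3]; exact mul_nonneg hp'0 hq0), hcast]
    rw [val_conj, e2, e3]
    exact min_eq_right (by linarith [key p' q hp'0 hp'd hq0 hqd])
  have k1 := key p q hp0 hpd hq0 hqd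
  have k2 := key p' q' hp'0 hp'd hq'0 hq'd
  have k3 := key p q' hp0 hpd hq'0 hq'd
  have k4 := key p' q hp'0 hp'd hq0 hqd
  have pq0 : 0 ≤ 2*(k:ℝ)*(p*q) := by positivity
  have p'q'0 : 0 ≤ 2*(k:ℝ)*(p'*q') := by positivity
  have pq'0 : 0 ≤ 2*(k:ℝ)*(p*q') := by positivity
  have p'q0 : 0 ≤ 2*(k:ℝ)*(p'*q) := by positivity
  have sminus : ((RPLForm.bigOplus (2*k) ((φ.ominus halfC).conj (halfC.ominus ψ))).oplus
      (RPLForm.bigOplus (2*k) ((halfC.ominus φ).conj (ψ.ominus halfC)))).val V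
      = 2*(k:ℝ)*(p*q') + 2*(k:ℝ)*(p'*q) := by
    rw [val_oplus _ _ _ (by rw [b3]; exact pq'0), b3, b4]
    exact min_eq_right (by linarith)
  have splus : ((RPLForm.bigOplus (2*k) ((φ.ominus halfC).conj (ψ.ominus halfC))).oplus
      (RPLForm.bigOplus (2*k) ((halfC.ominus φ).conj (halfC.ominus ψ)))).val V
      = 2*(k:ℝ)*(p*q) + 2*(k:ℝ)*(p'*q') := by
    rw [val_oplus _ _ _ (by rw [b1]; exact pq0), b1, b2]
    exact min_eq_right (by linarith)
  unfold mulF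
  rw [val_oplus, val_ominus V halfC _ (by rw [val_halfC]; norm_num) (by rw [val_halfC]; norm_num)
      (by rw [sminus]; linarith) (by rw [sminus]; linarith), val_halfC, sminus, splus]
  · rw [max_eq_right (by linarith), min_eq_right (by linarith)]
    have hup : p - p' = u - 1/2 := by
      rw [hp, hp']
      have := max_sub_max_neg (u - 1/2)
      rw [neg_sub] at this
      exact this
    have hvq : q - q' = v - 1/2 := by
      rw [hq, hq']
      have := max_sub_max_neg (v - 1/2)
      rw [neg_sub] at this
      exact this
    have hp'e : p' = p - (u - 1/2) := by linarith
    have hq'e : q' = q - (v - 1/2) := by linarith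
    rw [hp'e, hq'e]
    ring
  · rw [val_ominus V halfC _ (by rw [val_halfC]; norm_num) (by rw [val_halfC]; norm_num)
      (by rw [sminus]; linarith) (by rw [sminus]; linarith), val_halfC, sminus]
    exact le_max_left _ _


/-! #### Correctness of the translation -/

lemma bnd_le_k {i : ℝ} (hi : 0 < i) {k : ℕ} {t : RTerm} (h : 4 * (bnd i t)^2 ≤ (k:ℝ)) :
    bnd i t ≤ (k:ℝ) / 4 := by
  have h1 := one_le_bnd i hi.le t
  nlinarith

lemma translate_correct (i : ℝ) (hi : 0 < i) (k : ℕ) (hik : i ≤ (k:ℝ)) :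
    ∀ t : RTerm, 4 * (bnd i t)^2 ≤ (k:ℝ) →
    ∀ E : ℕ → ℝ, (∀ x, -i ≤ E x ∧ E x ≤ i) →
    (translate k t).val (fun p => scaleK (k:ℝ) (E p)) = scaleK (k:ℝ) (t.eval E) := by
  have hk0 : (0:ℝ) < (k:ℝ) := lt_of_lt_of_le hi hik
  intro t
  induction t with
  | const r =>
      intro hb E hE
      have hbr : |(r:ℝ)| + 1 ≤ (k:ℝ)/4 := bnd_le_k hi hb
      have hrk : |(r:ℝ)| ≤ (k:ℝ) := by linarith
      have hrkq : |r| ≤ (k:ℚ) := by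
        rw [← Rat.cast_le (K := ℝ)]
        push_cast
        exact hrk
      have hkq : (0:ℚ) < (k:ℚ) := by exact_mod_cast hk0
      have habs := abs_le.mp hrkq
      have hq0 : (0:ℚ) ≤ ((k:ℚ)+r)/(2*(k:ℚ)) := by
        apply div_nonneg (by linarith) (by linarith)
      have hq1 : ((k:ℚ)+r)/(2*(k:ℚ)) ≤ 1 := by
        rw [div_le_one (by linarith)]; linarith
      simp only [translate, trConst, RPLForm.val]
      rw [min_eq_right hq1, max_eq_right hq0]
      simp only [RTerm.eval]
      unfold scaleK
      push_cast
      ring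
  | var x =>
      intro _ E _
      simp only [translate, RPLForm.val, RTerm.eval]
  | add t t' iht iht' =>
      intro hb E hE
      have h1b : bnd i t ≤ bnd i (t.add t') := by
        simp only [bnd]; linarith [one_le_bnd i hi.le t']
      have h2b : bnd i t' ≤ bnd i (t.add t') := by
        simp only [bnd]; linarith [one_le_bnd i hi.le t]
      have hBnn : 0 ≤ bnd i (t.add t') := le_trans (by norm_num) (one_le_bnd i hi.le _)
      have h1 : 4 * (bnd i t)^2 ≤ (k:ℝ) := by nlinarith [one_le_bnd i hi.le t]
      have h2 : 4 * (bnd i t')^2 ≤ (k:ℝ) := by nlinarith [one_le_bnd i hi.le t']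
      have e1 := iht h1 E hE
      have e2 := iht' h2 E hE
      have hBk : bnd i (t.add t') ≤ (k:ℝ) := le_trans (bnd_le_k hi hb) (by linarith)
      have hab : |t.eval E + t'.eval E| ≤ (k:ℝ) := by
        have := eval_le_bnd i hi.le (t.add t') E hE
        simp only [RTerm.eval] at this ⊢
        linarith [this]
      have hat : |t.eval E| ≤ (k:ℝ) := le_trans (eval_le_bnd i hi.le t E hE) (by linarith)
      have hat' : |t'.eval E| ≤ (k:ℝ) := le_trans (eval_le_bnd i hi.le t' E hE) (by linarith)
      have hu := scaleK_mem hk0 (neg_le_of_abs_le hat) (le_of_abs_le hat)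
      have hv := scaleK_mem hk0 (neg_le_of_abs_le hat') (le_of_abs_le hat')
      have hw := scaleK_mem hk0 (neg_le_of_abs_le hab) (le_of_abs_le hab)
      have hsum : scaleK (k:ℝ) (t.eval E) + scaleK (k:ℝ) (t'.eval E) - 1/2
          = scaleK (k:ℝ) (t.eval E + t'.eval E) := by
        unfold scaleK
        field_simp
        ring
      simp only [translate, RTerm.eval]
      rw [val_addF _ _ _ (by rw [e1]; exact hu.1) (by rw [e1]; exact hu.2)
        (by rw [e2]; exact hv.1) (by rw [e2]; exact hv.2)
        (by rw [e1, e2]; linarith [hw.1, hsum]) (by rw [e1, e2]; linarith [hw.2, hsum]),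
        e1, e2, hsum]
  | mul t t' iht iht' =>
      intro hb E hE
      have hb1 := one_le_bnd i hi.le t
      have hb2 := one_le_bnd i hi.le t'
      have h1 : 4 * (bnd i t)^2 ≤ (k:ℝ) := by
        simp only [bnd] at hb
        have h' : (bnd i t)^2 * 1 ≤ (bnd i t)^2 * (bnd i t')^2 :=
          mul_le_mul_of_nonneg_left (by nlinarith) (sq_nonneg _)
        nlinarith
      have h2 : 4 * (bnd i t')^2 ≤ (k:ℝ) := by
        simp only [bnd] at hb
        have h' : (bnd i t')^2 * 1 ≤ (bnd i t')^2 * (bnd i t)^2 :=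
          mul_le_mul_of_nonneg_left (by nlinarith) (sq_nonneg _)
        nlinarith
      have e1 := iht h1 E hE
      have e2 := iht' h2 E hE
      have hBk := bnd_le_k hi hb
      simp only [bnd] at hBk
      have hat : |t.eval E| ≤ (k:ℝ) := by
        have := eval_le_bnd i hi.le t E hE
        nlinarith [bnd_le_k hi h1]
      have hat' : |t'.eval E| ≤ (k:ℝ) := by
        have := eval_le_bnd i hi.le t' E hE
        nlinarith [bnd_le_k hi h2]
      have hu := scaleK_mem hk0 (neg_le_of_abs_le hat) (le_of_abs_le hat)
      have hv := scaleK_mem hk0 (neg_le_of_abs_le hat') (le_of_abs_le hat')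
      have hd1 : |scaleK (k:ℝ) (t.eval E) - 1/2| ≤ bnd i t / (2*(k:ℝ)) := by
        rw [scaleK_sub_half hk0, abs_div, abs_of_pos (by linarith : (0:ℝ) < 2*(k:ℝ))]
        apply div_le_div_of_nonneg_right ?_ (by linarith)
        · exact eval_le_bnd i hi.le t E hE
      have hd2 : |scaleK (k:ℝ) (t'.eval E) - 1/2| ≤ bnd i t' / (2*(k:ℝ)) := by
        rw [scaleK_sub_half hk0, abs_div, abs_of_pos (by linarith : (0:ℝ) < 2*(k:ℝ))]
        apply div_le_div_of_nonneg_right ?_ (by linarith)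
        · exact eval_le_bnd i hi.le t' E hE
      have hsmall : 2*(k:ℝ) * ((bnd i t / (2*(k:ℝ))) * (bnd i t' / (2*(k:ℝ)))) ≤ 1/8 := by
        rw [div_mul_div_comm]
        rw [show (2*(k:ℝ)) * ((bnd i t * bnd i t') / (2*(k:ℝ) * (2*(k:ℝ))))
          = (bnd i t * bnd i t') / (2*(k:ℝ)) by field_simp]
        rw [div_le_iff₀ (by linarith : (0:ℝ) < 2*(k:ℝ))]
        nlinarith
      simp only [translate, RTerm.eval]
      rw [val_mulF _ k _ _ (bnd i t / (2*(k:ℝ))) (bnd i t' / (2*(k:ℝ)))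
        (by rw [e1]; exact hu.1) (by rw [e1]; exact hu.2)
        (by rw [e2]; exact hv.1) (by rw [e2]; exact hv.2)
        (by rw [e1]; exact hd1) (by rw [e2]; exact hd2) hsmall, e1, e2]
      rw [scaleK_sub_half hk0, scaleK_sub_half hk0]
      unfold scaleK
      field_simp
  | relu t iht =>
      intro hb E hE
      have hb' : 4 * (bnd i t)^2 ≤ (k:ℝ) := by simpa [bnd] using hb
      have e1 := iht hb' E hE
      have hat : |t.eval E| ≤ (k:ℝ) := by
        have := eval_le_bnd i hi.le t E hE
        nlinarith [bnd_le_k hi hb']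
      have hu := scaleK_mem hk0 (neg_le_of_abs_le hat) (le_of_abs_le hat)
      simp only [translate, RTerm.eval]
      rw [val_reluF _ _ (by rw [e1]; exact hu.1) (by rw [e1]; exact hu.2), e1]
      unfold scaleK
      rcases le_total (t.eval E) 0 with h | h
      · rw [max_eq_left h, max_eq_left (by
          rw [div_le_iff₀ (by linarith : (0:ℝ) < 2*(k:ℝ))]; linarith)]
        rw [eq_div_iff (by linarith : (2*(k:ℝ)) ≠ 0)]
        ring
      · rw [max_eq_right h, max_eq_right (by
          rw [le_div_iff₀ (by linarith : (0:ℝ) < 2*(k:ℝ))]; linarith)]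


/-! #### From formulae to terms -/

def toTerm : RPLForm → RTerm
  | .const r => .const r.1
  | .prop p => .var p
  | .impL φ ψ => .add (.const 1) (.mul (.const (-1))
      (.relu (.add (toTerm φ) (.mul (.const (-1)) (toTerm ψ)))))
  | .conj φ ψ => .mul (toTerm φ) (toTerm ψ)

lemma toTerm_deg_propFree : ∀ φ : RPLForm, φ.propFree → (toTerm φ).deg = 0 := by
  intro φ h
  induction φ with
  | const r => simp [toTerm, RTerm.deg]
  | prop p => simp [RPLForm.propFree] at h
  | impL φ ψ ih1 ih2 =>
      obtain ⟨h1, h2⟩ := h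
      simp [toTerm, RTerm.deg, ih1 h1, ih2 h2]
  | conj φ ψ ih1 ih2 =>
      obtain ⟨h1, h2⟩ := h
      simp [toTerm, RTerm.deg, ih1 h1, ih2 h2]

lemma toTerm_deg {n : ℕ} {φ : RPLForm} (h : RPLForm.InFrag n φ) : (toTerm φ).deg ≤ n := by
  induction h with
  | propfree h => rw [toTerm_deg_propFree _ h]; exact Nat.zero_le _
  | prop p => simp [toTerm, RTerm.deg]
  | up _ ih => exact le_trans ih (Nat.le_succ _)
  | @conj n i j α β _ _ hij ih1 ih2 =>
      simp only [toTerm, RTerm.deg]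
      omega
  | impL _ _ ih1 ih2 =>
      simp only [toTerm, RTerm.deg]
      omega

lemma toTerm_equiv : ∀ φ : RPLForm, TermFormEquiv (toTerm φ) φ := by
  intro φ E V hV hEV
  induction φ with
  | const r => simp [toTerm, RTerm.eval, RPLForm.val]
  | prop p => simpa [toTerm, RTerm.eval, RPLForm.val] using hEV p
  | impL φ ψ ih1 ih2 =>
      simp only [toTerm, RTerm.eval, RPLForm.val, ih1, ih2]
      push_cast
      rw [max_def, min_def]
      split_ifs <;> linarith
  | conj φ ψ ih1 ih2 =>
      simp only [toTerm, RTerm.eval, RPLForm.val, ih1, ih2]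

end CD

/-- ℚ[ReLU, x_i] with degree bound d and RPL(⊙)_{≤d} have the same
expressive power w.r.t. scaling. -/
theorem coolname_degree_eq_RPLodot_frag (d : ℕ) :
    (∀ (n : ℕ), 1 ≤ n → ∀ t : Fin n → RTerm, (∀ j, (t j).deg ≤ d) → ∀ i : ℝ, 0 < i →
      ∃ k : ℝ, i ≤ k ∧ ∃ φ : Fin n → RPLForm,
        (∀ j, RPLForm.InFrag d (φ j)) ∧ ∀ j, IKEquiv i k (φ j) (t j)) ∧
    (∀ (n : ℕ), 1 ≤ n → ∀ φ : Fin n → RPLForm, (∀ j, RPLForm.InFrag d (φ j)) →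
      ∃ t : Fin n → RTerm, (∀ j, (t j).deg ≤ d) ∧ ∀ j, TermFormEquiv (t j) (φ j)) := by
  constructor
  · intro n hn t ht i hi
    set C : ℝ := i + ∑ j : Fin n, 4 * (CD.bnd i (t j))^2 with hC
    have hterm : ∀ j : Fin n, 4 * (CD.bnd i (t j))^2 ≤ C := by
      intro j
      have h1 : 4 * (CD.bnd i (t j))^2 ≤ ∑ j : Fin n, 4 * (CD.bnd i (t j))^2 :=
        Finset.single_le_sum (f := fun j => 4 * (CD.bnd i (t j))^2)
          (fun j _ => by positivity) (Finset.mem_univ j)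
      linarith
    have hiC : i ≤ C := by
      have : (0:ℝ) ≤ ∑ j : Fin n, 4 * (CD.bnd i (t j))^2 :=
        Finset.sum_nonneg (fun j _ => by positivity)
      linarith
    set k : ℕ := ⌈C⌉₊ with hk
    have hCk : C ≤ (k:ℝ) := Nat.le_ceil C
    refine ⟨(k:ℝ), le_trans hiC hCk, fun j => CD.translate k (t j), fun j => ?_, fun j => ?_⟩
    · exact CD.InFrag_mono (ht j) (CD.translate_frag k (t j))
    · intro E hE
      exact CD.translate_correct i hi k (le_trans hiC hCk) (t j)
        (le_trans (hterm j) hCk) E hE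
  · intro n hn φ hφ
    exact ⟨fun j => CD.toTerm (φ j), fun j => CD.toTerm_deg (hφ j),
      fun j => CD.toTerm_equiv (φ j)⟩
end

section
/- For every rational r ∈ [0,1] there exists a formula of LΠ½ containing no proposition symbols whose truth value under every valuation equals r. -/
/-- Truncated sum φ ⊕ ψ in LΠ½. -/
def LPiForm.oplusL (φ ψ : LPiForm) : LPiForm := (φ.impL .zero).impL ψ

/-- (1/2)^k. -/
def LPiForm.halfPow : ℕ → LPiForm
  | 0 => .impL .zero .zero
  | k + 1 => .conj .half (LPiForm.halfPow k)

/-- min 1 (n · φ). -/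
def LPiForm.nsum : ℕ → LPiForm → LPiForm
  | 0, _ => .zero
  | n + 1, φ => (LPiForm.nsum n φ).oplusL φ

lemma LPiForm.val_mem (φ : LPiForm) (V : ℕ → ℝ) (hV : IsValuation V) :
    0 ≤ φ.val V ∧ φ.val V ≤ 1 := by
  induction φ with
  | zero => simp [LPiForm.val]
  | half => norm_num [LPiForm.val]
  | prop p => exact hV p
  | impL φ ψ ihφ ihψ =>
      refine ⟨?_, min_le_left _ _⟩
      have := ihφ.2; have := ihψ.1
      simp only [LPiForm.val, le_min_iff]
      constructor <;> linarith
  | conj φ ψ ihφ ihψ =>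
      constructor
      · exact mul_nonneg ihφ.1 ihψ.1
      · calc φ.val V * ψ.val V ≤ 1 * 1 := by
              apply mul_le_mul ihφ.2 ihψ.2 ihψ.1 (by norm_num)
          _ = 1 := by norm_num
  | impP φ ψ ihφ ihψ =>
      simp only [LPiForm.val]
      split
      · norm_num
      · rename_i h
        push_neg at h
        have hφ : 0 < φ.val V := lt_of_le_of_lt ihψ.1 h
        exact ⟨div_nonneg ihψ.1 hφ.le, (div_le_one hφ).2 h.le⟩

lemma LPiForm.halfPow_propFree (k : ℕ) : (LPiForm.halfPow k).propFree := by
  induction k with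
  | zero => simp [LPiForm.halfPow, LPiForm.propFree]
  | succ k ih => exact ⟨trivial, ih⟩

lemma LPiForm.halfPow_val (k : ℕ) (V : ℕ → ℝ) :
    (LPiForm.halfPow k).val V = (1 / 2 : ℝ) ^ k := by
  induction k with
  | zero => simp [LPiForm.halfPow, LPiForm.val]
  | succ k ih => simp [LPiForm.halfPow, LPiForm.val, ih]; ring

lemma LPiForm.oplusL_val (φ ψ : LPiForm) (V : ℕ → ℝ) (h0 : 0 ≤ φ.val V) (h1 : φ.val V ≤ 1) :
    (φ.oplusL ψ).val V = min 1 (φ.val V + ψ.val V) := by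
  simp only [LPiForm.oplusL, LPiForm.val]
  rw [min_eq_right (show 1 - φ.val V + 0 ≤ 1 by linarith)]
  ring_nf

lemma LPiForm.nsum_propFree (n : ℕ) (φ : LPiForm) (h : φ.propFree) :
    (LPiForm.nsum n φ).propFree := by
  induction n with
  | zero => trivial
  | succ n ih => exact ⟨⟨ih, trivial⟩, h⟩

lemma LPiForm.nsum_val (n : ℕ) (φ : LPiForm) (V : ℕ → ℝ)
    (h0 : 0 ≤ φ.val V) (h1 : φ.val V ≤ 1) :
    (LPiForm.nsum n φ).val V = min 1 ((n : ℝ) * φ.val V) := by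
  induction n with
  | zero => simp [LPiForm.nsum, LPiForm.val]
  | succ n ih =>
      have hmem : 0 ≤ (LPiForm.nsum n φ).val V ∧ (LPiForm.nsum n φ).val V ≤ 1 := by
        rw [ih]
        constructor
        · exact le_min (by norm_num) (by positivity)
        · exact min_le_left _ _
      rw [LPiForm.nsum, LPiForm.oplusL_val _ _ _ hmem.1 hmem.2, ih]
      push_cast
      rcases le_or_gt 1 ((n : ℝ) * φ.val V) with h | h
      · rw [min_eq_left h, min_eq_left (by linarith), min_eq_left (by nlinarith)]
      · rw [min_eq_right h.le]
        congr 1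
        ring

/-- every rational in [0,1] is definable in LΠ½ without
proposition symbols. -/
theorem rationals_definable_in_LPH (r : ℚ) (h0 : 0 ≤ r) (h1 : r ≤ 1) :
    ∃ ψ : LPiForm, ψ.propFree ∧ ∀ V : ℕ → ℝ, IsValuation V → ψ.val V = (r : ℝ) := by
  have hq0 : 0 < r.den := r.pos
  have hnum : 0 ≤ r.num := Rat.num_nonneg.mpr h0
  set p : ℕ := r.num.toNat with hpdef
  set q : ℕ := r.den with hqdef
  have hpz : (p : ℤ) = r.num := Int.toNat_of_nonneg hnum
  have hnd : r.num ≤ (q : ℤ) := by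
    have h := h1
    rw [← Rat.num_div_den r, div_le_one (by exact_mod_cast hq0)] at h
    exact_mod_cast h
  have hpq : p ≤ q := by omega
  have hpzR : (p : ℝ) = (r.num : ℝ) := by exact_mod_cast hpz
  have hr : (r : ℝ) = (p : ℝ) / (q : ℝ) := by
    rw [Rat.cast_def, hpzR]
  refine ⟨.impP (LPiForm.nsum q (LPiForm.halfPow q)) (LPiForm.nsum p (LPiForm.halfPow q)),
    ⟨LPiForm.nsum_propFree _ _ (LPiForm.halfPow_propFree q),
     LPiForm.nsum_propFree _ _ (LPiForm.halfPow_propFree q)⟩, ?_⟩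
  intro V hV
  have hhv : (LPiForm.halfPow q).val V = (1/2 : ℝ) ^ q := LPiForm.halfPow_val q V
  have hh0 : 0 ≤ (LPiForm.halfPow q).val V := by rw [hhv]; positivity
  have hh1 : (LPiForm.halfPow q).val V ≤ 1 := by
    rw [hhv]; exact pow_le_one₀ (by norm_num) (by norm_num)
  have h2q : (q : ℝ) ≤ 2 ^ q := by exact_mod_cast (Nat.lt_two_pow_self (n := q)).le
  have h2pos : (0 : ℝ) < (1/2 : ℝ) ^ q := by positivity
  have hqpos : (0 : ℝ) < (q : ℝ) := by exact_mod_cast hq0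
  have keyq : (q : ℝ) * (1/2) ^ q ≤ 1 := by
    rw [one_div, inv_pow, ← div_eq_mul_inv, div_le_one (by positivity)]
    exact h2q
  have keyp : (p : ℝ) * (1/2) ^ q ≤ 1 := by
    refine le_trans ?_ keyq
    have : (p : ℝ) ≤ (q : ℝ) := by exact_mod_cast hpq
    nlinarith
  have hA : (LPiForm.nsum q (LPiForm.halfPow q)).val V = (q : ℝ) * (1/2) ^ q := by
    rw [LPiForm.nsum_val _ _ _ hh0 hh1, hhv, min_eq_right keyq]
  have hB : (LPiForm.nsum p (LPiForm.halfPow q)).val V = (p : ℝ) * (1/2) ^ q := by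
    rw [LPiForm.nsum_val _ _ _ hh0 hh1, hhv, min_eq_right keyp]
  simp only [LPiForm.val]
  rw [hA, hB]
  by_cases hle : (q : ℝ) * (1/2) ^ q ≤ (p : ℝ) * (1/2) ^ q
  · rw [if_pos hle]
    have hqp : q ≤ p := by
      have := (mul_le_mul_iff_left₀ h2pos).mp hle
      exact_mod_cast this
    have hpq' : p = q := le_antisymm hpq hqp
    rw [hr, hpq', div_self (ne_of_gt hqpos)]
  · rw [if_neg hle, hr]
    field_simp
end

section
/- For each formula φ of RPL(⊙)_{≤1}, there exists a neuron n_φ (i.e., an output neuron of some rational-parameter ReLU-activated neural network) that is equivalent to φ. -/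
namespace LogicNeuronsAux

/-- Evaluations with values in [0,1]. -/
def Valid (E : ℕ → ℝ) : Prop := ∀ x, 0 ≤ E x ∧ E x ≤ 1

/-- A network all of whose neurons take values in [0,1] on valid inputs. -/
def GoodNN (d : ℕ) (N : List RTerm) : Prop :=
  IsNN d N ∧ ∀ E, Valid E → ∀ t ∈ N, 0 ≤ t.eval E ∧ t.eval E ≤ 1

lemma foldr_eval (l : List (ℚ × RTerm)) (b : ℚ) (E : ℕ → ℝ) :
    (l.foldr (fun wt acc => RTerm.add (.mul (.const wt.1) wt.2) acc) (.const b)).eval E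
      = (l.map (fun p => (p.1 : ℝ) * p.2.eval E)).sum + b := by
  induction l with
  | nil => simp [RTerm.eval]
  | cons hd tl ih => simp [RTerm.eval, ih]; ring

lemma zip_sum (c : ℕ → ℚ) (N : List RTerm) (E : ℕ → ℝ) :
    ((((List.range N.length).map c).zip N).map (fun p => (p.1 : ℝ) * p.2.eval E)).sum
      = ∑ j ∈ Finset.range N.length, (c j : ℝ) * (N.getD j (.const 0)).eval E := by
  induction N generalizing c with
  | nil => simp
  | cons t N ih =>
    rw [List.length_cons, List.range_succ_eq_map, List.map_cons, List.zip_cons_cons,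
      List.map_cons, List.sum_cons, List.map_map, Finset.sum_range_succ']
    simp only [Function.comp_def, Nat.succ_eq_add_one]
    rw [ih (fun j => c (j + 1))]
    simp [add_comm]

def rowOf (c : ℕ → ℚ) (L : ℕ) : List ℚ := (List.range L).map c

lemma layer_eval (c : ℕ → ℚ) (b : ℚ) (N : List RTerm) (E : ℕ → ℝ) :
    (layerNeuron ((rowOf c N.length).zip N) b).eval E
      = max 0 ((∑ j ∈ Finset.range N.length, (c j : ℝ) * (N.getD j (.const 0)).eval E) + b) := by
  show max 0 _ = _
  rw [rowOf, foldr_eval, zip_sum]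

lemma sum_delta_mul (L k : ℕ) (hk : k < L) (q : ℚ) (v : ℕ → ℝ) :
    ∑ j ∈ Finset.range L, ((if j = k then q else 0 : ℚ) : ℝ) * v j = (q : ℝ) * v k := by
  rw [Finset.sum_eq_single_of_mem k (Finset.mem_range.2 hk)]
  · simp
  · intro b _ hb; simp [hb]

lemma extend (d : ℕ) (N : List RTerm) (h : GoodNN d N) (c : ℕ → ℚ) (b : ℚ)
    (hle : ∀ E, Valid E →
      (∑ j ∈ Finset.range N.length, (c j : ℝ) * (N.getD j (.const 0)).eval E) + b ≤ 1) :
    ∃ N', GoodNN (d + 1) N' ∧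
      (∀ t ∈ N, ∃ t' ∈ N', ∀ E, Valid E → t'.eval E = t.eval E) ∧
      ∃ t ∈ N', ∀ E, Valid E →
        t.eval E = max 0 ((∑ j ∈ Finset.range N.length,
          (c j : ℝ) * (N.getD j (.const 0)).eval E) + b) := by
  classical
  set L := N.length with hL
  set params : List (List ℚ × ℚ) :=
    ((List.range L).map (fun i => (rowOf (fun j => if j = i then 1 else 0) L, (0 : ℚ))))
      ++ [(rowOf c L, b)] with hparams
  have hlen : ∀ p ∈ params, p.1.length = N.length := by
    intro p hp
    rw [hparams, List.mem_append, List.mem_map] at hp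
    rcases hp with ⟨i, _, rfl⟩ | hp
    · simp [rowOf, hL]
    · simp at hp; subst hp; simp [rowOf, hL]
  have hnn : IsNN (d + 1) (params.map fun p => layerNeuron (p.1.zip N) p.2) :=
    IsNN.layer h.1 params (by simp [hparams]) hlen
  refine ⟨params.map fun p => layerNeuron (p.1.zip N) p.2, ⟨hnn, ?_⟩, ?_, ?_⟩
  · -- Good: all values in [0,1]
    intro E hE t' ht'
    rw [List.mem_map] at ht'
    obtain ⟨p, hp, rfl⟩ := ht'
    rw [hparams, List.mem_append, List.mem_map] at hp
    rcases hp with ⟨i, hi, rfl⟩ | hp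
    · rw [List.mem_range] at hi
      have : (layerNeuron ((rowOf (fun j => if j = i then 1 else 0) L).zip N) 0).eval E
          = max 0 ((N.getD i (.const 0)).eval E) := by
        rw [layer_eval]
        rw [sum_delta_mul L i hi]
        simp
      rw [this]
      have hmem : N.getD i (.const 0) ∈ N := by
        rw [List.getD_eq_getElem _ _ hi]; exact List.getElem_mem hi
      have := h.2 E hE _ hmem
      constructor
      · exact le_max_left _ _
      · exact max_le (by norm_num) this.2
    · simp at hp; subst hp
      rw [layer_eval]
      exact ⟨le_max_left _ _, max_le (by norm_num) (hle E hE)⟩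
  · -- preservation
    intro t ht
    obtain ⟨i, hi, rfl⟩ := List.mem_iff_getElem.1 ht
    refine ⟨layerNeuron ((rowOf (fun j => if j = i then 1 else 0) L).zip N) 0, ?_, ?_⟩
    · rw [List.mem_map]
      exact ⟨(rowOf (fun j => if j = i then 1 else 0) L, 0), by
        rw [hparams, List.mem_append, List.mem_map]
        exact Or.inl ⟨i, List.mem_range.2 hi, rfl⟩, rfl⟩
    · intro E hE
      rw [layer_eval, sum_delta_mul L i hi]
      rw [List.getD_eq_getElem _ _ hi]
      have := h.2 E hE _ (List.getElem_mem hi)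
      simp [max_eq_right this.1]
  · -- new neuron
    refine ⟨layerNeuron ((rowOf c L).zip N) b, ?_, ?_⟩
    · rw [List.mem_map]
      exact ⟨(rowOf c L, b), by rw [hparams, List.mem_append]; simp, rfl⟩
    · intro E hE; exact layer_eval c b N E

lemma getD_mem_eval (N : List RTerm) (k : ℕ) (hk : k < N.length) (t : RTerm)
    (ht : N[k] = t) (E : ℕ → ℝ) : (N.getD k (.const 0)).eval E = t.eval E := by
  rw [List.getD_eq_getElem _ _ hk, ht]

/-- Add a constant neuron. -/
lemma extend_const (d : ℕ) (N : List RTerm) (h : GoodNN d N) (q : ℚ)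
    (h0 : 0 ≤ q) (h1 : q ≤ 1) :
    ∃ N', GoodNN (d + 1) N' ∧
      (∀ t ∈ N, ∃ t' ∈ N', ∀ E, Valid E → t'.eval E = t.eval E) ∧
      ∃ t ∈ N', ∀ E, Valid E → t.eval E = (q : ℝ) := by
  obtain ⟨N', hg, hpres, t, ht, hval⟩ := extend d N h (fun _ => 0) q
    (by intro E hE; simp; exact_mod_cast h1)
  refine ⟨N', hg, hpres, t, ht, fun E hE => ?_⟩
  rw [hval E hE]; simp; exact_mod_cast h0

/-- Add a neuron scaling an existing one by q ∈ [0,1]. -/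
lemma extend_scale (d : ℕ) (N : List RTerm) (h : GoodNN d N) (t₀ : RTerm) (ht₀ : t₀ ∈ N)
    (q : ℚ) (h0 : 0 ≤ q) (h1 : q ≤ 1) :
    ∃ N', GoodNN (d + 1) N' ∧
      (∀ t ∈ N, ∃ t' ∈ N', ∀ E, Valid E → t'.eval E = t.eval E) ∧
      ∃ t ∈ N', ∀ E, Valid E → t.eval E = (q : ℝ) * t₀.eval E := by
  obtain ⟨k, hk, hkt⟩ := List.mem_iff_getElem.1 ht₀
  have hsum : ∀ E : ℕ → ℝ, (∑ j ∈ Finset.range N.length,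
      ((if j = k then q else 0 : ℚ) : ℝ) * (N.getD j (.const 0)).eval E) + (0:ℚ)
        = (q : ℝ) * t₀.eval E := by
    intro E
    rw [sum_delta_mul _ k hk, getD_mem_eval N k hk t₀ hkt]
    simp
  obtain ⟨N', hg, hpres, t, ht, hval⟩ := extend d N h (fun j => if j = k then q else 0) 0
    (by
      intro E hE
      rw [hsum E]
      have := h.2 E hE t₀ ht₀
      have hq : (q:ℝ) ≤ 1 := by exact_mod_cast h1
      have hq0 : (0:ℝ) ≤ q := by exact_mod_cast h0
      nlinarith [this.1, this.2])
  refine ⟨N', hg, hpres, t, ht, fun E hE => ?_⟩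
  rw [hval E hE, hsum E]
  have := h.2 E hE t₀ ht₀
  have hq0 : (0:ℝ) ≤ q := by exact_mod_cast h0
  exact max_eq_right (by nlinarith [this.1])

/-- Add a neuron computing max 0 (t₁ - t₂). -/
lemma extend_sub (d : ℕ) (N : List RTerm) (h : GoodNN d N) (t₁ t₂ : RTerm)
    (h₁ : t₁ ∈ N) (h₂ : t₂ ∈ N) :
    ∃ N', GoodNN (d + 1) N' ∧
      (∀ t ∈ N, ∃ t' ∈ N', ∀ E, Valid E → t'.eval E = t.eval E) ∧
      ∃ t ∈ N', ∀ E, Valid E → t.eval E = max 0 (t₁.eval E - t₂.eval E) := by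
  obtain ⟨k₁, hk₁, he₁⟩ := List.mem_iff_getElem.1 h₁
  obtain ⟨k₂, hk₂, he₂⟩ := List.mem_iff_getElem.1 h₂
  have hsum : ∀ E : ℕ → ℝ, (∑ j ∈ Finset.range N.length,
      (((if j = k₁ then 1 else 0) - (if j = k₂ then 1 else 0) : ℚ) : ℝ)
        * (N.getD j (.const 0)).eval E) + (0:ℚ)
        = t₁.eval E - t₂.eval E := by
    intro E
    have hsplit : ∀ j : ℕ, (((if j = k₁ then 1 else 0) - (if j = k₂ then 1 else 0) : ℚ) : ℝ)
        * (N.getD j (.const 0)).eval E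
        = ((if j = k₁ then (1:ℚ) else 0 : ℚ) : ℝ) * (N.getD j (.const 0)).eval E
          - ((if j = k₂ then (1:ℚ) else 0 : ℚ) : ℝ) * (N.getD j (.const 0)).eval E := by
      intro j; push_cast; ring
    rw [Finset.sum_congr rfl fun j _ => hsplit j, Finset.sum_sub_distrib,
      sum_delta_mul _ k₁ hk₁, sum_delta_mul _ k₂ hk₂,
      getD_mem_eval N k₁ hk₁ t₁ he₁, getD_mem_eval N k₂ hk₂ t₂ he₂]
    push_cast
    ring
  obtain ⟨N', hg, hpres, t, ht, hval⟩ := extend d N h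
    (fun j => (if j = k₁ then 1 else 0) - (if j = k₂ then 1 else 0)) 0
    (by
      intro E hE
      rw [hsum E]
      have b1 := h.2 E hE t₁ h₁
      have b2 := h.2 E hE t₂ h₂
      linarith [b1.2, b2.1])
  refine ⟨N', hg, hpres, t, ht, fun E hE => ?_⟩
  rw [hval E hE, hsum E]

/-- Add a neuron computing 1 - t₀ (for t₀ with values in [0,1]). -/
lemma extend_oneminus (d : ℕ) (N : List RTerm) (h : GoodNN d N) (t₀ : RTerm) (ht₀ : t₀ ∈ N) :
    ∃ N', GoodNN (d + 1) N' ∧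
      (∀ t ∈ N, ∃ t' ∈ N', ∀ E, Valid E → t'.eval E = t.eval E) ∧
      ∃ t ∈ N', ∀ E, Valid E → t.eval E = 1 - t₀.eval E := by
  obtain ⟨k, hk, hkt⟩ := List.mem_iff_getElem.1 ht₀
  have hsum : ∀ E : ℕ → ℝ, (∑ j ∈ Finset.range N.length,
      ((if j = k then (-1) else 0 : ℚ) : ℝ) * (N.getD j (.const 0)).eval E) + (1:ℚ)
        = 1 - t₀.eval E := by
    intro E
    rw [sum_delta_mul _ k hk, getD_mem_eval N k hk t₀ hkt]
    push_cast; ring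
  obtain ⟨N', hg, hpres, t, ht, hval⟩ := extend d N h (fun j => if j = k then (-1) else 0) 1
    (by intro E hE; rw [hsum E]; linarith [(h.2 E hE t₀ ht₀).1])
  refine ⟨N', hg, hpres, t, ht, fun E hE => ?_⟩
  rw [hval E hE, hsum E]
  exact max_eq_right (by linarith [(h.2 E hE t₀ ht₀).2])

lemma one_sub_max (a b : ℝ) : 1 - max 0 (a - b) = min 1 (1 - a + b) := by
  rcases le_total a b with hab | hab
  · rw [max_eq_left (by linarith), min_eq_left (by linarith)]; ring
  · rw [max_eq_right (by linarith), min_eq_right (by linarith)]; ring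

/-- Proposition symbols of a formula. -/
def props : RPLForm → List ℕ
  | .const _ => []
  | .prop p => [p]
  | .impL a b => props a ++ props b
  | .conj a b => props a ++ props b

lemma propFree_const : ∀ φ : RPLForm, φ.propFree →
    ∃ c : ℚ, 0 ≤ c ∧ c ≤ 1 ∧ ∀ V : ℕ → ℝ, φ.val V = (c : ℝ)
  | .const r, _ => ⟨r.1, r.2.1, r.2.2, fun V => rfl⟩
  | .prop _, hf => absurd hf (by simp [RPLForm.propFree])
  | .impL a b, hf => by
      obtain ⟨c₁, h10, h11, hv1⟩ := propFree_const a hf.1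
      obtain ⟨c₂, h20, h21, hv2⟩ := propFree_const b hf.2
      refine ⟨min 1 (1 - c₁ + c₂), le_min (by norm_num) (by linarith), min_le_left _ _,
        fun V => ?_⟩
      show min 1 (1 - a.val V + b.val V) = _
      rw [hv1 V, hv2 V]
      push_cast
      rfl
  | .conj a b, hf => by
      obtain ⟨c₁, h10, h11, hv1⟩ := propFree_const a hf.1
      obtain ⟨c₂, h20, h21, hv2⟩ := propFree_const b hf.2
      refine ⟨c₁ * c₂, by positivity, by nlinarith, fun V => ?_⟩
      show a.val V * b.val V = _
      rw [hv1 V, hv2 V]; push_cast; ring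

lemma infrag_zero {φ : RPLForm} (h : RPLForm.InFrag 0 φ) : φ.propFree := by
  cases h with
  | propfree h => exact h

/-- Main induction. -/
lemma main : ∀ (n : ℕ) (φ : RPLForm), RPLForm.InFrag n φ → n ≤ 1 →
    ∀ (d : ℕ) (N : List RTerm), GoodNN d N →
    (∀ p ∈ props φ, ∃ t ∈ N, ∀ E, Valid E → t.eval E = E p) →
    ∃ d' N', GoodNN d' N' ∧
      (∀ t ∈ N, ∃ t' ∈ N', ∀ E, Valid E → t'.eval E = t.eval E) ∧
      ∃ t ∈ N', ∀ E, Valid E → t.eval E = φ.val E := by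
  intro n φ h
  induction h with
  | @propfree n φ hf =>
    intro _ d N hN _
    obtain ⟨c, h0, h1, hv⟩ := propFree_const φ hf
    obtain ⟨N', hg, hpres, t, ht, hval⟩ := extend_const d N hN c h0 h1
    exact ⟨d + 1, N', hg, hpres, t, ht, fun E hE => by rw [hval E hE, hv E]⟩
  | @prop n p =>
    intro _ d N hN hprops
    obtain ⟨t, ht, hval⟩ := hprops p (by simp [props])
    exact ⟨d, N, hN, fun t ht => ⟨t, ht, fun _ _ => rfl⟩, t, ht, hval⟩
  | @up n φ hφ ih =>
    intro hn
    exact ih (by omega)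
  | @conj n i j α β hα hβ hij ihα ihβ =>
    intro hn d N hN hprops
    have hn0 : n = 0 := by omega
    subst hn0
    have hcases : i = 0 ∨ j = 0 := by omega
    have hpα : ∀ p ∈ props α, ∃ t ∈ N, ∀ E, Valid E → t.eval E = E p := by
      intro p hp; exact hprops p (by simp [props, hp])
    have hpβ : ∀ p ∈ props β, ∃ t ∈ N, ∀ E, Valid E → t.eval E = E p := by
      intro p hp; exact hprops p (by simp [props, hp])
    rcases hcases with rfl | rfl
    · -- α is a constant
      obtain ⟨c, h0, h1, hv⟩ := propFree_const α (infrag_zero hα)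
      obtain ⟨d₁, N₁, hg₁, hpres₁, t₁, ht₁, hval₁⟩ := ihβ (by omega) d N hN hpβ
      obtain ⟨N₂, hg₂, hpres₂, t₂, ht₂, hval₂⟩ := extend_scale d₁ N₁ hg₁ t₁ ht₁ c h0 h1
      refine ⟨d₁ + 1, N₂, hg₂, ?_, t₂, ht₂, fun E hE => ?_⟩
      · intro t ht
        obtain ⟨t', ht', hv'⟩ := hpres₁ t ht
        obtain ⟨t'', ht'', hv''⟩ := hpres₂ t' ht'
        exact ⟨t'', ht'', fun E hE => by rw [hv'' E hE, hv' E hE]⟩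
      · rw [hval₂ E hE, hval₁ E hE]
        show _ = α.val E * β.val E
        rw [hv E]
    · -- β is a constant
      obtain ⟨c, h0, h1, hv⟩ := propFree_const β (infrag_zero hβ)
      obtain ⟨d₁, N₁, hg₁, hpres₁, t₁, ht₁, hval₁⟩ := ihα (by omega) d N hN hpα
      obtain ⟨N₂, hg₂, hpres₂, t₂, ht₂, hval₂⟩ := extend_scale d₁ N₁ hg₁ t₁ ht₁ c h0 h1
      refine ⟨d₁ + 1, N₂, hg₂, ?_, t₂, ht₂, fun E hE => ?_⟩
      · intro t ht
        obtain ⟨t', ht', hv'⟩ := hpres₁ t ht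
        obtain ⟨t'', ht'', hv''⟩ := hpres₂ t' ht'
        exact ⟨t'', ht'', fun E hE => by rw [hv'' E hE, hv' E hE]⟩
      · rw [hval₂ E hE, hval₁ E hE]
        show _ = α.val E * β.val E
        rw [hv E]; ring
  | @impL n φ ψ hφ hψ ihφ ihψ =>
    intro hn d N hN hprops
    have hpφ : ∀ p ∈ props φ, ∃ t ∈ N, ∀ E, Valid E → t.eval E = E p := by
      intro p hp; exact hprops p (by simp [props, hp])
    have hpψ : ∀ p ∈ props ψ, ∃ t ∈ N, ∀ E, Valid E → t.eval E = E p := by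
      intro p hp; exact hprops p (by simp [props, hp])
    obtain ⟨d₁, N₁, hg₁, hpres₁, t₁, ht₁, hval₁⟩ := ihφ hn d N hN hpφ
    have hpψ₁ : ∀ p ∈ props ψ, ∃ t ∈ N₁, ∀ E, Valid E → t.eval E = E p := by
      intro p hp
      obtain ⟨t, ht, hv⟩ := hpψ p hp
      obtain ⟨t', ht', hv'⟩ := hpres₁ t ht
      exact ⟨t', ht', fun E hE => by rw [hv' E hE, hv E hE]⟩
    obtain ⟨d₂, N₂, hg₂, hpres₂, t₂, ht₂, hval₂⟩ := ihψ hn d₁ N₁ hg₁ hpψ₁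
    obtain ⟨t₁', ht₁', hval₁'⟩ := hpres₂ t₁ ht₁
    obtain ⟨N₃, hg₃, hpres₃, u, hu, hvalu⟩ := extend_sub d₂ N₂ hg₂ t₁' t₂ ht₁' ht₂
    obtain ⟨N₄, hg₄, hpres₄, w, hw, hvalw⟩ := extend_oneminus (d₂+1) N₃ hg₃ u hu
    refine ⟨d₂ + 2, N₄, hg₄, ?_, w, hw, fun E hE => ?_⟩
    · intro t ht
      obtain ⟨a, ha, hva⟩ := hpres₁ t ht
      obtain ⟨b, hb, hvb⟩ := hpres₂ a ha
      obtain ⟨e, he, hve⟩ := hpres₃ b hb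
      obtain ⟨f, hf, hvf⟩ := hpres₄ e he
      exact ⟨f, hf, fun E hE => by
        rw [hvf E hE, hve E hE, hvb E hE, hva E hE]⟩
    · rw [hvalw E hE, hvalu E hE, hval₁' E hE, hval₁ E hE, hval₂ E hE]
      show _ = min 1 (1 - φ.val E + ψ.val E)
      exact one_sub_max _ _

lemma mem_le_foldr (p : ℕ) (l : List ℕ) (h : p ∈ l) : p ≤ l.foldr max 0 := by
  induction l with
  | nil => simp at h
  | cons a l ih =>
    rcases List.mem_cons.1 h with rfl | h
    · exact le_max_left _ _
    · exact le_trans (ih h) (le_max_right _ _)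

end LogicNeuronsAux
/-- translation from RPL(⊙)_{≤1} to neurons. -/
theorem logic_to_neurons (φ : RPLForm) (h : RPLForm.InFrag 1 φ) :
    ∃ t : RTerm, IsNeuron t ∧ TermFormEquiv t φ := by
  classical
  set m := (LogicNeuronsAux.props φ).foldr max 0 + 1 with hm
  set N₀ : List RTerm := (List.range m).map RTerm.var with hN0
  have hgood : LogicNeuronsAux.GoodNN 0 N₀ := by
    constructor
    · exact IsNN.input (List.range m) (by simp [hm]) List.nodup_range
    · intro E hE t ht
      rw [hN0, List.mem_map] at ht
      obtain ⟨x, _, rfl⟩ := ht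
      exact hE x
  have hprops : ∀ p ∈ LogicNeuronsAux.props φ, ∃ t ∈ N₀, ∀ E, LogicNeuronsAux.Valid E →
      t.eval E = E p := by
    intro p hp
    refine ⟨RTerm.var p, ?_, fun E _ => rfl⟩
    rw [hN0, List.mem_map]
    exact ⟨p, List.mem_range.2 (by
      have := LogicNeuronsAux.mem_le_foldr p _ hp
      omega), rfl⟩
  obtain ⟨d', N', hg', _, t, ht, hval⟩ :=
    LogicNeuronsAux.main 1 φ h (le_refl 1) 0 N₀ hgood hprops
  refine ⟨t, ⟨d', N', hg'.1, ht⟩, ?_⟩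
  intro E V hV hEV
  have hEVf : E = V := funext hEV
  subst hEVf
  exact hval E hV
end

section
/- Let i, k be reals with 0 < i ≤ k and let x ∈ VAR be a variable. There exists no formula of infinite-valued Łukasiewicz logic that is (i,k)-equivalent to the term ReLU(x). -/

lemma luk_lattice (v : ℝ) (V : ℕ → ℝ) (hV : ∀ p, V p = v) :
    ∀ φ : RPLForm, φ.isLuk → ∃ a b : ℤ, φ.val V = a + b * v := by
  intro φ h
  induction φ with
  | const r =>
      have h' : (r.1 : ℚ) = 0 := h
      exact ⟨0, 0, by simp only [RPLForm.val]; rw [show ((r.1 : ℝ)) = 0 by exact_mod_cast h']; push_cast; ring⟩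
  | prop p => exact ⟨0, 1, by simp [RPLForm.val, hV p]⟩
  | impL φ ψ ihφ ihψ =>
      obtain ⟨a1, b1, h1⟩ := ihφ h.1
      obtain ⟨a2, b2, h2⟩ := ihψ h.2
      rcases min_cases (1 : ℝ) (1 - φ.val V + ψ.val V) with ⟨hm, _⟩ | ⟨hm, _⟩
      · exact ⟨1, 0, by simp [RPLForm.val, hm]⟩
      · refine ⟨1 - a1 + a2, b2 - b1, ?_⟩
        show min 1 (1 - φ.val V + ψ.val V) = _
        rw [hm, h1, h2]; push_cast; ring
  | conj φ ψ _ _ => exact absurd h (by simp [RPLForm.isLuk])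


/-- Łukasiewicz logic cannot express ReLU(x) up to scaling. -/
theorem Lukasiewicz_cannot_handle_ReLU (i k : ℝ) (hi : 0 < i) (hik : i ≤ k) (x : ℕ) :
    ¬ ∃ φ : RPLForm, φ.isLuk ∧ IKEquiv i k φ (RTerm.relu (.var x)) := by
  rintro ⟨φ, hluk, hequiv⟩
  have hk : (0:ℝ) < k := lt_of_lt_of_le hi hik
  -- bad set of τ
  set bad : Set ℝ := {τ | ∃ a b : ℤ, (2*a + b - 1 : ℝ) + 2*b*τ = 0} with hbad
  have hbadc : bad.Countable := by
    have : bad ⊆ Set.range (fun p : ℤ × ℤ => ((1 - 2*p.1 - p.2 : ℝ)) / (2*p.2)) := by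
      rintro τ ⟨a, b, hab⟩
      have hb : (b : ℝ) ≠ 0 := by
        intro h0
        have hb0 : b = 0 := by exact_mod_cast h0
        subst hb0
        push_cast at hab
        have : (2*a : ℝ) = 1 := by linarith
        have : (2*a : ℤ) = 1 := by exact_mod_cast this
        omega
      exact ⟨(a, b), by field_simp; linarith⟩
    exact Set.Countable.mono this (Set.countable_range _)
  -- pick good τ in Ico (-(i/(2k))) 0
  have hI : (-(i/(2*k)) : ℝ) < 0 := by
    have : (0:ℝ) < i/(2*k) := by positivity
    linarith
  have : ¬ (Set.Ico (-(i/(2*k))) (0:ℝ) ⊆ bad) := by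
    intro hsub
    have := (hbadc.mono hsub)
    have hcard := Cardinal.mk_Ico_real hI
    rw [← Set.countable_coe_iff] at this
    have := Cardinal.mk_le_aleph0_iff.mpr this
    rw [hcard] at this
    exact absurd this (by simp [Cardinal.aleph0_lt_continuum.not_ge])
  obtain ⟨τ, hτmem, hτgood⟩ := Set.not_subset.mp this
  obtain ⟨hτ1, hτ2⟩ := hτmem
  -- evaluation
  set E : ℕ → ℝ := fun _ => 2*k*τ with hE
  have h2k : (0:ℝ) < 2*k := by linarith
  have hEb : ∀ p, -i ≤ E p ∧ E p ≤ i := by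
    intro p
    have h1 : 2*k*(-(i/(2*k))) ≤ 2*k*τ := mul_le_mul_of_nonneg_left hτ1 (le_of_lt h2k)
    have h1' : 2*k*(-(i/(2*k))) = -i := by field_simp
    constructor
    · show -i ≤ 2*k*τ
      linarith
    · show 2*k*τ ≤ i
      nlinarith
  have hval := hequiv E hEb
  have hErelu : (RTerm.relu (RTerm.var x)).eval E = 0 := by
    simp only [RTerm.eval, hE]
    have : 2*k*τ ≤ 0 := by nlinarith
    simp [max_eq_left this]
  rw [hErelu] at hval
  have hsc : scaleK k 0 = 1/2 := by
    unfold scaleK; field_simp; ring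
  rw [hsc] at hval
  set v : ℝ := 1/2 + τ with hv
  have hVp : ∀ p, scaleK k (E p) = v := by
    intro p
    unfold scaleK
    rw [hE, hv]
    field_simp
  obtain ⟨a, b, hab⟩ := luk_lattice v (fun p => scaleK k (E p)) hVp φ hluk
  rw [hval] at hab
  exact hτgood ⟨a, b, by rw [hv] at hab; push_cast; nlinarith [hab]⟩
end
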